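/- Positive lower bound for the Maupertuis functional: let h < 0, r ∈ (0, r_LJ), q ∈ ℝ² with |q| = r, and let H_coll^q be the set of H¹ paths u : [0,1] → ℝ² with u(0)=q, u(1)=0, |u(s)| ≤ r for all s. Then for every u ∈ H_coll^q, M_h(u) = (1/2)∫₀¹|u̇|² · ∫₀¹(h+V(u)) ≥ −αhr²/(2(2−α)) > 0. -/

import Mathlib

/-!
Since `u` runs from `q` to the origin, `r = ‖u 1 - u 0‖ ≤ ∫₀¹ ‖u'‖ ≤ (∫₀¹ ‖u'‖²)^{1/2}`, so the
kinetic factor is at least `r² / 2`. Along the path `‖u‖ ≤ r`, hence `V(u) ≥ U_min r^{-α}`, and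
`r < r_LJ` says precisely that `U_min r^{-α} > -2h/(2-α)`; thus `h + V(u) > -αh/(2-α) > 0`
almost everywhere, and the product of the two factors is at least `-αhr²/(2(2-α))`.
-/

open Set MeasureTheory intervalIntegral

noncomputable def Vpot (α : ℝ) (U : EuclideanSpace ℝ (Fin 2) → ℝ)
    (x : EuclideanSpace ℝ (Fin 2)) : ℝ :=
  ‖x‖ ^ (-α) * U (‖x‖⁻¹ • x)

section Kinetic

variable {E : Type*} [NormedAddCommGroup E] [NormedSpace ℝ E] [CompleteSpace E]
  {u u' : ℝ → E} {a b : ℝ}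

theorem aestronglyMeasurable_of_hasDerivAt_Ioo (hderiv : ∀ s ∈ Ioo a b, HasDerivAt u (u' s) s) :
    AEStronglyMeasurable u' (volume.restrict (Ioc a b)) := by
  refine (stronglyMeasurable_deriv u).aestronglyMeasurable.restrict.congr ?_
  have hIoo : ∀ᵐ s ∂volume.restrict (Ioc a b), s ∈ Ioo a b :=
    (ae_restrict_congr_set Ioo_ae_eq_Ioc).mp (ae_restrict_mem measurableSet_Ioo)
  filter_upwards [hIoo] with s hs
  exact (hderiv s hs).deriv

theorem intervalIntegrable_of_hasDerivAt_of_sq_norm (hab : a ≤ b)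
    (hderiv : ∀ s ∈ Ioo a b, HasDerivAt u (u' s) s)
    (hL2 : IntervalIntegrable (fun s => ‖u' s‖ ^ 2) volume a b) :
    IntervalIntegrable u' volume a b := by
  rw [intervalIntegrable_iff_integrableOn_Ioc_of_le hab] at hL2 ⊢
  exact ((memLp_two_iff_integrable_sq_norm (aestronglyMeasurable_of_hasDerivAt_Ioo hderiv)).2
    hL2).integrable one_le_two

theorem norm_sub_le_integral_norm_of_hasDerivAt (hab : a ≤ b)
    (hcont : ContinuousOn u (Icc a b)) (hderiv : ∀ s ∈ Ioo a b, HasDerivAt u (u' s) s)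
    (hint : IntervalIntegrable u' volume a b) :
    ‖u b - u a‖ ≤ ∫ s in a..b, ‖u' s‖ := by
  rw [← integral_eq_sub_of_hasDerivAt_of_le hab hcont hderiv hint]
  exact norm_integral_le_integral_norm hab

theorem sq_integral_le_mul_integral_sq {f : ℝ → ℝ} (hab : a ≤ b)
    (hf : IntervalIntegrable f volume a b)
    (hf2 : IntervalIntegrable (fun s => f s ^ 2) volume a b) :
    (∫ s in a..b, f s) ^ 2 ≤ (b - a) * ∫ s in a..b, f s ^ 2 := by
  set I := ∫ s in a..b, f s
  have hAMGM : ∀ t, 2 * t * I ≤ (∫ s in a..b, f s ^ 2) + (b - a) * t ^ 2 := fun t => by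
    have hmono : ∫ s in a..b, 2 * t * f s ≤ ∫ s in a..b, (f s ^ 2 + t ^ 2) :=
      integral_mono_on hab (hf.const_mul _) (hf2.add intervalIntegrable_const) fun s _ => by
        nlinarith [sq_nonneg (f s - t)]
    rwa [intervalIntegral.integral_const_mul, integral_add hf2 intervalIntegrable_const,
      intervalIntegral.integral_const, smul_eq_mul] at hmono
  rcases hab.eq_or_lt with rfl | hlt
  · simp [I]
  · have hpos : 0 < b - a := sub_pos.2 hlt
    have hopt := hAMGM (I / (b - a))
    field_simp at hopt
    nlinarith

theorem sq_norm_sub_le_mul_integral_sq_norm_deriv (hab : a ≤ b)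
    (hcont : ContinuousOn u (Icc a b)) (hderiv : ∀ s ∈ Ioo a b, HasDerivAt u (u' s) s)
    (hL2 : IntervalIntegrable (fun s => ‖u' s‖ ^ 2) volume a b) :
    ‖u b - u a‖ ^ 2 ≤ (b - a) * ∫ s in a..b, ‖u' s‖ ^ 2 := by
  have hint := intervalIntegrable_of_hasDerivAt_of_sq_norm hab hderiv hL2
  calc ‖u b - u a‖ ^ 2 ≤ (∫ s in a..b, ‖u' s‖) ^ 2 := by
        gcongr
        exact norm_sub_le_integral_norm_of_hasDerivAt hab hcont hderiv hint
    _ ≤ (b - a) * ∫ s in a..b, ‖u' s‖ ^ 2 := sq_integral_le_mul_integral_sq hab hint.norm hL2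

end Kinetic

noncomputable def ljRadius (α h Umin : ℝ) : ℝ :=
  ((2 - α) * Umin / (-2 * h)) ^ (1 / α)

section Potential

variable {α h Umin r : ℝ} {U : EuclideanSpace ℝ (Fin 2) → ℝ}

theorem rpow_neg_mul_le_Vpot (hα : 0 ≤ α)
    (hUmin : ∀ s : EuclideanSpace ℝ (Fin 2), ‖s‖ = 1 → Umin ≤ U s) (hUminpos : 0 ≤ Umin)
    {x : EuclideanSpace ℝ (Fin 2)} (hx : x ≠ 0) (hxr : ‖x‖ ≤ r) :
    r ^ (-α) * Umin ≤ Vpot α U x := by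
  have hxpos : 0 < ‖x‖ := norm_pos_iff.2 hx
  have hdir : ‖‖x‖⁻¹ • x‖ = 1 := by
    rw [norm_smul, norm_inv, norm_norm, inv_mul_cancel₀ hxpos.ne']
  exact mul_le_mul (Real.rpow_le_rpow_of_nonpos hxpos hxr (neg_nonpos.2 hα))
    (hUmin _ hdir) hUminpos (Real.rpow_nonneg (norm_nonneg _) _)

theorem neg_two_mul_div_lt_of_lt_ljRadius (hα : α ∈ Ioo 0 2) (hh : h < 0) (hUminpos : 0 < Umin)
    (hr : 0 < r) (hrLJ : r < ljRadius α h Umin) :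
    -2 * h / (2 - α) < r ^ (-α) * Umin := by
  obtain ⟨hα0, hα2⟩ := hα
  have h2α : 0 < 2 - α := sub_pos.2 hα2
  have hrα : r ^ α < (2 - α) * Umin / (-2 * h) := by
    rwa [ljRadius, one_div, Real.lt_rpow_inv_iff_of_pos hr.le
      (div_pos (mul_pos h2α hUminpos) (by linarith)).le hα0] at hrLJ
  rw [lt_div_iff₀ (by linarith)] at hrα
  rw [Real.rpow_neg hr.le, inv_mul_eq_div, lt_div_iff₀ (Real.rpow_pos_of_pos hr α),
    div_mul_eq_mul_div, div_lt_iff₀ h2α]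
  linarith

theorem neg_mul_div_lt_add_Vpot (hα : α ∈ Ioo 0 2) (hh : h < 0)
    (hUmin : ∀ s : EuclideanSpace ℝ (Fin 2), ‖s‖ = 1 → Umin ≤ U s) (hUminpos : 0 < Umin)
    (hrLJ : r < ljRadius α h Umin) {x : EuclideanSpace ℝ (Fin 2)} (hx : x ≠ 0) (hxr : ‖x‖ ≤ r) :
    -α * h / (2 - α) < h + Vpot α U x := by
  have hr : 0 < r := (norm_pos_iff.2 hx).trans_le hxr
  have h2α : 2 - α ≠ 0 := (sub_pos.2 hα.2).ne'
  have hsplit : -α * h / (2 - α) = h + -2 * h / (2 - α) := by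
    field_simp
    ring
  linarith [rpow_neg_mul_le_Vpot hα.1.le hUmin hUminpos.le hx hxr,
    neg_two_mul_div_lt_of_lt_ljRadius hα hh hUminpos hr hrLJ]

end Potential

theorem maupertuis_lower_bound
    (α h Umin r : ℝ) (hα : α ∈ Set.Ioo (0:ℝ) 2) (hh : h < 0)
    (U : EuclideanSpace ℝ (Fin 2) → ℝ)
    (hUmin : ∀ s : EuclideanSpace ℝ (Fin 2), ‖s‖ = 1 → Umin ≤ U s)
    (hUminpos : 0 < Umin)
    (hr : 0 < r) (hrLJ : r < ((2 - α) * Umin / (-2 * h)) ^ (1/α))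
    (q : EuclideanSpace ℝ (Fin 2)) (hq : ‖q‖ = r)
    (u u' : ℝ → EuclideanSpace ℝ (Fin 2))
    (hu0 : u 0 = q) (hu1 : u 1 = 0)
    (hderiv : ∀ s ∈ Ioo (0:ℝ) 1, HasDerivAt u (u' s) s)
    (hcont : ContinuousOn u (Icc 0 1))
    (hbound : ∀ s ∈ Icc (0:ℝ) 1, ‖u s‖ ≤ r)
    (hae : ∀ᵐ s, s ∈ Icc (0:ℝ) 1 → u s ≠ 0)
    (hL2 : IntervalIntegrable (fun s => ‖u' s‖ ^ 2) volume 0 1)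
    (hVint : IntervalIntegrable (fun s => h + Vpot α U (u s)) volume 0 1) :
    ((1/2) * ∫ s in (0:ℝ)..1, ‖u' s‖ ^ 2) *
        (∫ s in (0:ℝ)..1, (h + Vpot α U (u s))) ≥
      -α * h * r ^ 2 / (2 * (2 - α)) ∧
    (0:ℝ) < -α * h * r ^ 2 / (2 * (2 - α)) := by
  have h2α : 0 < 2 - α := sub_pos.2 hα.2
  have hc : 0 < -α * h / (2 - α) := div_pos (by nlinarith [hα.1]) h2α
  have hkin : r ^ 2 ≤ ∫ s in (0:ℝ)..1, ‖u' s‖ ^ 2 := by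
    simpa [hu0, hu1, hq] using
      sq_norm_sub_le_mul_integral_sq_norm_deriv zero_le_one hcont hderiv hL2
  have hpot : -α * h / (2 - α) ≤ ∫ s in (0:ℝ)..1, (h + Vpot α U (u s)) := by
    have hle : ∀ᵐ s ∂volume.restrict (Icc (0:ℝ) 1), -α * h / (2 - α) ≤ h + Vpot α U (u s) := by
      filter_upwards [ae_restrict_of_ae hae, ae_restrict_mem measurableSet_Icc] with s hs0 hs
      exact (neg_mul_div_lt_add_Vpot hα hh hUmin hUminpos hrLJ (hs0 hs) (hbound s hs)).le
    simpa using integral_mono_ae_restrict zero_le_one intervalIntegrable_const hVint hle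
  have hrhs : -α * h * r ^ 2 / (2 * (2 - α)) = (1 / 2 * r ^ 2) * (-α * h / (2 - α)) := by
    field_simp
  refine ⟨?_, by rw [hrhs]; positivity⟩
  rw [ge_iff_le, hrhs]
  exact mul_le_mul (by linarith) hpot hc.le (by linarith [sq_nonneg r])
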